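/- arXiv:2501.08965 — 2 statements merged into one kernel-verified Lean document; each statement's English description precedes it below -/
import Mathlib

section
/- Let (V,e₀,e₁) model a compatible couple (X₀,X₁) and let 1 ≤ q < ∞. If b ∈ SV(0,∞) satisfies ∫₀^∞ t^{−1} b(t)^q dt < ∞, then X₀ is dense in (X₀,X₁)_{0,q,b;K}: for every f with ‖f‖_{0,q,b;K} < ∞ and every ε > 0 there exists g ∈ V with e₀ g < ∞ and ‖f − g‖_{0,q,b;K} < ε. -/
open MeasureTheory Set Filter ENNReal
open scoped Topology NNReal

noncomputable section

/-- A positive, finite, Lebesgue-measurable function on `(0,∞)` is slowly varying if for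
every `ε > 0`, `t ^ ε * b t` is equivalent to a nondecreasing function on `(0,∞)` and
`t ^ (-ε) * b t` is equivalent to a nonincreasing function on `(0,∞)`. -/
def SlowlyVarying (b : ℝ → ℝ) : Prop :=
  Measurable b ∧ (∀ t ∈ Ioi (0:ℝ), 0 < b t) ∧
  ∀ ε : ℝ, 0 < ε →
    ((∃ g : ℝ → ℝ, MonotoneOn g (Ioi 0) ∧
        ∃ c C : ℝ, 0 < c ∧ 0 < C ∧ ∀ t ∈ Ioi (0:ℝ),
          c * g t ≤ t ^ ε * b t ∧ t ^ ε * b t ≤ C * g t) ∧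
      (∃ g : ℝ → ℝ, AntitoneOn g (Ioi 0) ∧
        ∃ c C : ℝ, 0 < c ∧ 0 < C ∧ ∀ t ∈ Ioi (0:ℝ),
          c * g t ≤ t ^ (-ε) * b t ∧ t ^ (-ε) * b t ≤ C * g t))

variable {V : Type*}

/-- The Peetre `K`-functional of a couple of extended norms. -/
def Kfun [AddCommGroup V] (e₀ e₁ : V → ℝ≥0∞) (f : V) (t : ℝ) : ℝ≥0∞ :=
  ⨅ g : V, e₀ (f - g) + ENNReal.ofReal t * e₁ g

/-- The Peetre `J`-functional of a couple of extended norms. -/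
def Jfun (e₀ e₁ : V → ℝ≥0∞) (f : V) (t : ℝ) : ℝ≥0∞ :=
  max (e₀ f) (ENNReal.ofReal t * e₁ f)

/-- The extended norm of the sum space `X₀ + X₁`. -/
def eSum [AddCommGroup V] (e₀ e₁ : V → ℝ≥0∞) (f : V) : ℝ≥0∞ :=
  Kfun e₀ e₁ f 1

/-- The extended norm of the intersection `X₀ ∩ X₁`. -/
def eInt (e₀ e₁ : V → ℝ≥0∞) (f : V) : ℝ≥0∞ :=
  max (e₀ f) (e₁ f)

/-- The `K`-space (quasi-)norm `‖f‖_{0,q,w;K}` computed over the set `S`; for `q = ∞` it is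
the supremum of `w t * K(f,t)` over `S`. -/
def KnormOn [AddCommGroup V] (e₀ e₁ : V → ℝ≥0∞) (q : ℝ≥0∞) (w : ℝ → ℝ) (S : Set ℝ)
    (f : V) : ℝ≥0∞ :=
  if q = ⊤ then ⨆ t ∈ S, ENNReal.ofReal (w t) * Kfun e₀ e₁ f t
  else (∫⁻ t in S, (ENNReal.ofReal (w t) * Kfun e₀ e₁ f t) ^ q.toReal /
    ENNReal.ofReal t) ^ (1 / q.toReal)

/-- `u` is a strongly measurable representation of `f` over the parameter set `S`,
exhausted by the sets `I n`: the truncated Bochner integrals `∫_{I n} u(s) ds/s`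
converge to `f` in the sum space `(X₀ + X₁, e_Σ)`. -/
def JRepOn [NormedAddCommGroup V] [NormedSpace ℝ V] (e₀ e₁ : V → ℝ≥0∞) (S : Set ℝ)
    (I : ℕ → Set ℝ) (f : V) (u : ℝ → V) : Prop :=
  AEStronglyMeasurable u (volume.restrict S) ∧
  (∀ t ∈ S, e₀ (u t) < ⊤ ∧ e₁ (u t) < ⊤) ∧
  (∀ n, IntegrableOn (fun s => s⁻¹ • u s) (I n)) ∧
  Tendsto (fun n => eSum e₀ e₁ (f - ∫ s in I n, s⁻¹ • u s)) atTop (𝓝 0)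

/-- The `J`-space (quasi-)norm `‖f‖_{0,q,w;J}` computed over the set `S` (with exhausting
sequence `I`); for `q = ∞` the essential supremum over `S` is used. -/
def JnormOn [NormedAddCommGroup V] [NormedSpace ℝ V] (e₀ e₁ : V → ℝ≥0∞) (q : ℝ≥0∞)
    (w : ℝ → ℝ) (S : Set ℝ) (I : ℕ → Set ℝ) (f : V) : ℝ≥0∞ :=
  ⨅ (u : ℝ → V) (_ : JRepOn e₀ e₁ S I f u),
    if q = ⊤ then essSup (fun t => ENNReal.ofReal (w t) * Jfun e₀ e₁ (u t) t)
      (volume.restrict S)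
    else (∫⁻ t in S, (ENNReal.ofReal (w t) * Jfun e₀ e₁ (u t) t) ^ q.toReal /
      ENNReal.ofReal t) ^ (1 / q.toReal)

/-- Exhaustion of `(0,∞)`. -/
def Iall : ℕ → Set ℝ := fun n => Ioc ((n + 1 : ℝ)⁻¹) (n + 1)

/-- Exhaustion of `(1,∞)`. -/
def Itop : ℕ → Set ℝ := fun n => Ioc (1 : ℝ) (n + 1)

/-- Exhaustion of `(0,1)`. -/
def Ibot : ℕ → Set ℝ := fun n => Ioc ((n + 1 : ℝ)⁻¹) 1

/-- Two extended-real-valued norms are equivalent with two-sided positive constants. -/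
def EquivENorms (N₁ N₂ : V → ℝ≥0∞) : Prop :=
  ∃ c C : ℝ≥0∞, 0 < c ∧ C < ⊤ ∧ ∀ f : V, c * N₁ f ≤ N₂ f ∧ N₂ f ≤ C * N₁ f

/-- `g` is locally absolutely continuous on `(0,∞)` with derivative `g'` (in the sense of the
fundamental theorem of calculus for the Lebesgue integral). -/
def LocACOn (g g' : ℝ → ℝ) : Prop :=
  ∀ u v : ℝ, 0 < u → u ≤ v →
    IntegrableOn g' (Icc u v) ∧ g v - g u = ∫ t in u..v, g' t

/-- The extended norm structure `ENorm 𝕜 V` of the older Mathlib (removed since; the name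
`ENorm` is now a different class), restored with its original fields. -/
structure ExtNorm (𝕜 : Type*) (W : Type*) [NormedField 𝕜] [AddCommGroup W] [Module 𝕜 W] where
  toFun : W → ℝ≥0∞
  eq_zero' : ∀ x, toFun x = 0 → x = 0
  map_add_le' : ∀ x y : W, toFun (x + y) ≤ toFun x + toFun y
  map_smul_le' : ∀ (c : 𝕜) (x : W), toFun (c • x) ≤ ‖c‖₊ * toFun x

instance ExtNorm.instCoeFun (𝕜 : Type*) (W : Type*) [NormedField 𝕜] [AddCommGroup W]
    [Module 𝕜 W] : CoeFun (ExtNorm 𝕜 W) (fun _ => W → ℝ≥0∞) :=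
  ⟨ExtNorm.toFun⟩

lemma ExtNorm.map_sub_le {W : Type*} [AddCommGroup W] [Module ℝ W] (e : ExtNorm ℝ W)
    (x y : W) : e (x - y) ≤ e x + e y := by
  rw [sub_eq_add_neg]
  refine (e.map_add_le' x (-y)).trans (add_le_add le_rfl ?_)
  have := e.map_smul_le' (-1) y
  simpa using this

@[simp] lemma ExtNorm.toFun_zero {W : Type*} [AddCommGroup W] [Module ℝ W] (e : ExtNorm ℝ W) :
    e.toFun 0 = 0 :=
  le_antisymm (by simpa using e.map_smul_le' 0 0) bot_le


section AuxK

variable {V : Type*} [AddCommGroup V] [Module ℝ V] (e₀ e₁ : ExtNorm ℝ V)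

lemma Kfun_mono (h : V) : Monotone (Kfun ⇑e₀ ⇑e₁ h) := fun _ _ hst =>
  le_iInf fun g => (iInf_le _ g).trans
    (add_le_add_right (mul_le_mul_left (ENNReal.ofReal_le_ofReal hst) _) _)

lemma Kfun_le_e0 (h : V) (t : ℝ) : Kfun ⇑e₀ ⇑e₁ h t ≤ e₀ h :=
  (iInf_le _ 0).trans (by simp)

lemma Kfun_le_e1 (h : V) (t : ℝ) : Kfun ⇑e₀ ⇑e₁ h t ≤ ENNReal.ofReal t * e₁ h :=
  (iInf_le _ h).trans (by simp)

lemma Kfun_measurable (h : V) : Measurable (Kfun ⇑e₀ ⇑e₁ h) :=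
  (Kfun_mono e₀ e₁ h).measurable

lemma Kfun_scale (h : V) {s t : ℝ} (hst : s ≤ t) (ht : 0 < t) :
    ENNReal.ofReal s * Kfun ⇑e₀ ⇑e₁ h t ≤ ENNReal.ofReal t * Kfun ⇑e₀ ⇑e₁ h s := by
  haveI : Nonempty V := ⟨0⟩
  conv_rhs => rw [Kfun, ENNReal.mul_iInf_of_ne (ENNReal.ofReal_pos.mpr ht).ne'
    ENNReal.ofReal_ne_top]
  refine le_iInf fun g => ?_
  calc ENNReal.ofReal s * Kfun ⇑e₀ ⇑e₁ h t
      ≤ ENNReal.ofReal s * (e₀ (h - g) + ENNReal.ofReal t * e₁ g) :=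
        mul_le_mul_right (iInf_le _ g) _
    _ = ENNReal.ofReal s * e₀ (h - g) + ENNReal.ofReal t * (ENNReal.ofReal s * e₁ g) := by ring
    _ ≤ ENNReal.ofReal t * e₀ (h - g) + ENNReal.ofReal t * (ENNReal.ofReal s * e₁ g) :=
        add_le_add_left (mul_le_mul_left (ENNReal.ofReal_le_ofReal hst) _) _
    _ = ENNReal.ofReal t * (e₀ (h - g) + ENNReal.ofReal s * e₁ g) := by ring

lemma Kfun_sub_le (x y : V) (t : ℝ) :
    Kfun ⇑e₀ ⇑e₁ (x - y) t ≤ Kfun ⇑e₀ ⇑e₁ x t + Kfun ⇑e₀ ⇑e₁ y t := by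
  haveI : Nonempty V := ⟨0⟩
  conv_rhs => rw [Kfun, ENNReal.iInf_add]
  refine le_iInf fun a => ?_
  conv_rhs => rw [Kfun, ENNReal.add_iInf]
  refine le_iInf fun c => ?_
  refine (iInf_le _ (a - c)).trans ?_
  have h0 : (⇑e₀) (x - y - (a - c)) ≤ e₀ (x - a) + e₀ (y - c) := by
    have hxy : x - y - (a - c) = (x - a) - (y - c) := by abel
    rw [hxy]; exact e₀.map_sub_le _ _
  calc (⇑e₀) (x - y - (a - c)) + ENNReal.ofReal t * (⇑e₁) (a - c)
      ≤ (e₀ (x - a) + e₀ (y - c)) + ENNReal.ofReal t * (e₁ a + e₁ c) :=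
        add_le_add h0 (mul_le_mul_right (e₁.map_sub_le _ _) _)
    _ = (e₀ (x - a) + ENNReal.ofReal t * e₁ a) + (e₀ (y - c) + ENNReal.ofReal t * e₁ c) := by
        ring

end AuxK

lemma lintegral_inv_Ioi_top {a : ℝ} (ha : 1 ≤ a) :
    ∫⁻ t in Ioi a, ENNReal.ofReal t⁻¹ = ⊤ := by
  have ha0 : (0:ℝ) < a := lt_of_lt_of_le one_pos ha
  by_contra hfin
  have hpos : 0 ≤ᵐ[volume.restrict (Ioi a)] fun t : ℝ => t⁻¹ := by
    filter_upwards [ae_restrict_mem measurableSet_Ioi] with t ht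
    exact inv_nonneg.mpr (le_of_lt (ha0.trans ht))
  have hint : IntegrableOn (fun t : ℝ => t⁻¹) (Ioi a) :=
    (lintegral_ofReal_ne_top_iff_integrable measurable_inv.aestronglyMeasurable hpos).mp hfin
  have : IntegrableOn (fun t : ℝ => t ^ (-1 : ℝ)) (Ioi a) := by
    refine hint.congr_fun (fun t ht => ?_) measurableSet_Ioi
    rw [Real.rpow_neg_one]
  rw [integrableOn_Ioi_rpow_iff ha0] at this
  linarith

/-- Density theorem: if `∫₀^∞ t⁻¹ b(t)^q dt < ∞`, then `X₀` is dense in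
`(X₀,X₁)_{0,q,b;K}`. -/
theorem X0_dense_in_Kspace
    {V : Type*} [AddCommGroup V] [Module ℝ V]
    (e₀ e₁ : ExtNorm ℝ V) (q : ℝ) (hq : 1 ≤ q)
    (b : ℝ → ℝ)
    (hb : SlowlyVarying b)
    (hbint : ∫⁻ t in Ioi (0:ℝ), ENNReal.ofReal (t⁻¹ * b t ^ q) < ⊤) :
    ∀ f : V, KnormOn ⇑e₀ ⇑e₁ (ENNReal.ofReal q) b (Ioi 0) f < ⊤ →
      ∀ ε : ℝ, 0 < ε → ∃ g : V, e₀ g < ⊤ ∧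
        KnormOn ⇑e₀ ⇑e₁ (ENNReal.ofReal q) b (Ioi 0) (f - g) < ENNReal.ofReal ε := by
  intro f hf ε hε
  haveI : Nonempty V := ⟨0⟩
  have hq0 : (0:ℝ) < q := lt_of_lt_of_le one_pos hq
  set N : V → ℝ≥0∞ := fun v =>
    ∫⁻ t in Ioi (0:ℝ), (ENNReal.ofReal (b t) * Kfun ⇑e₀ ⇑e₁ v t) ^ q / ENNReal.ofReal t with hN
  have hKnorm : ∀ v : V, KnormOn ⇑e₀ ⇑e₁ (ENNReal.ofReal q) b (Ioi 0) v = (N v) ^ (1/q) := by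
    intro v
    rw [KnormOn, if_neg ENNReal.ofReal_ne_top, ENNReal.toReal_ofReal hq0.le]
  have hNf : N f ≠ ⊤ := by
    intro htop
    rw [hKnorm, htop, ENNReal.top_rpow_of_pos (by positivity)] at hf
    exact lt_irrefl _ hf
  have hmx : Measurable fun t : ℝ => ENNReal.ofReal (b t) :=
    ENNReal.measurable_ofReal.comp hb.1
  have hFmeas : ∀ v : V,
      Measurable fun t => (ENNReal.ofReal (b t) * Kfun ⇑e₀ ⇑e₁ v t) ^ q / ENNReal.ofReal t :=
    fun v => (ENNReal.continuous_rpow_const.measurable.comp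
      (hmx.mul (Kfun_measurable e₀ e₁ v))).div ENNReal.measurable_ofReal
  -- K f is finite everywhere
  have hfin_ae : ∃ t₀ : ℝ, 0 < t₀ ∧ Kfun ⇑e₀ ⇑e₁ f t₀ < ⊤ := by
    have h1 : ∀ᵐ t ∂(volume.restrict (Ioi (0:ℝ))),
        (ENNReal.ofReal (b t) * Kfun ⇑e₀ ⇑e₁ f t) ^ q / ENNReal.ofReal t < ⊤ :=
      ae_lt_top (hFmeas f) hNf
    have hne : volume.restrict (Ioi (0:ℝ)) ≠ 0 := by
      simp [Measure.restrict_eq_zero]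
    haveI := MeasureTheory.ae_neBot.mpr hne
    obtain ⟨t₀, ht₁, ht₂⟩ := (h1.and (ae_restrict_mem measurableSet_Ioi)).exists
    rw [mem_Ioi] at ht₂
    refine ⟨t₀, ht₂, ?_⟩
    by_contra hK
    push_neg at hK
    have hKtop : Kfun ⇑e₀ ⇑e₁ f t₀ = ⊤ := top_le_iff.mp hK
    have hb0 : ENNReal.ofReal (b t₀) ≠ 0 := (ENNReal.ofReal_pos.mpr (hb.2.1 t₀ ht₂)).ne'
    rw [hKtop, ENNReal.mul_top hb0, ENNReal.top_rpow_of_pos hq0,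
      ENNReal.top_div_of_ne_top ENNReal.ofReal_ne_top] at ht₁
    exact lt_irrefl _ ht₁
  obtain ⟨t₀, ht₀pos, hKt₀⟩ := hfin_ae
  have hKfin : ∀ T : ℝ, 0 < T → Kfun ⇑e₀ ⇑e₁ f T < ⊤ := by
    intro T hT
    rcases le_total T t₀ with hc | hc
    · exact lt_of_le_of_lt (Kfun_mono e₀ e₁ f hc) hKt₀
    · by_contra htop
      push_neg at htop
      have h1 := Kfun_scale e₀ e₁ f hc hT
      rw [top_le_iff.mp htop, ENNReal.mul_top (ENNReal.ofReal_pos.mpr ht₀pos).ne'] at h1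
      exact lt_irrefl ⊤ (h1.trans_lt (ENNReal.mul_lt_top ENNReal.ofReal_lt_top hKt₀))
  -- lower bound for b on [1, ∞)
  have hb1pos : (0:ℝ) < b 1 := hb.2.1 1 (mem_Ioi.mpr one_pos)
  obtain ⟨g, hgmono, c, C, hc, hC, hgbd⟩ := (hb.2.2 (1/2) (by norm_num)).1
  set c₁ : ℝ := c * (b 1 / C) with hc₁
  have hc₁pos : 0 < c₁ := by positivity
  have hgpos : 0 < g 1 := by
    have h2 := (hgbd 1 (mem_Ioi.mpr one_pos)).2
    rw [Real.one_rpow, one_mul] at h2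
    nlinarith
  have hlow : ∀ t : ℝ, 1 ≤ t → c₁ / t ^ (1/2 : ℝ) ≤ b t := by
    intro t ht
    have ht0 : (0:ℝ) < t := lt_of_lt_of_le one_pos ht
    have h1 : b 1 / C ≤ g 1 := by
      have h2 := (hgbd 1 (mem_Ioi.mpr one_pos)).2
      rw [Real.one_rpow, one_mul] at h2
      rw [div_le_iff₀ hC]
      nlinarith
    have h2 : g 1 ≤ g t := hgmono (mem_Ioi.mpr one_pos) (mem_Ioi.mpr ht0) ht
    have h3 : c * g t ≤ t ^ (1/2:ℝ) * b t := (hgbd t (mem_Ioi.mpr ht0)).1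
    have h4 : c₁ ≤ t ^ (1/2:ℝ) * b t := by
      have : c₁ ≤ c * g t := by
        rw [hc₁]
        nlinarith
      linarith
    rw [div_le_iff₀ (Real.rpow_pos_of_pos ht0 _)]
    nlinarith [Real.rpow_pos_of_pos ht0 (1/2:ℝ)]
  -- good decomposition points exist arbitrarily far out
  have hT_exists : ∀ m : ℝ, 1 ≤ m →
      ∃ T : ℝ, m ≤ T ∧ Kfun ⇑e₀ ⇑e₁ f T ≤ ENNReal.ofReal (T / m) := by
    intro m hm
    by_contra hcon
    push_neg at hcon
    set κ : ℝ≥0∞ := ENNReal.ofReal ((c₁ / m) ^ q) with hκ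
    have hm0 : (0:ℝ) < m := lt_of_lt_of_le one_pos hm
    have hκ0 : κ ≠ 0 := by
      rw [hκ]
      exact (ENNReal.ofReal_pos.mpr (Real.rpow_pos_of_pos (by positivity) _)).ne'
    have hge : ∀ t : ℝ, t ∈ Ioi m →
        κ * ENNReal.ofReal t⁻¹
          ≤ (ENNReal.ofReal (b t) * Kfun ⇑e₀ ⇑e₁ f t) ^ q / ENNReal.ofReal t := by
      intro t ht
      rw [mem_Ioi] at ht
      have ht1 : (1:ℝ) ≤ t := hm.trans ht.le
      have ht0 : (0:ℝ) < t := lt_of_lt_of_le one_pos ht1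
      have hs0 : (0:ℝ) < t ^ (1/2:ℝ) := Real.rpow_pos_of_pos ht0 _
      have hKt : ENNReal.ofReal (t / m) ≤ Kfun ⇑e₀ ⇑e₁ f t := (hcon t ht.le).le
      have hss : t ^ (1/2:ℝ) * t ^ (1/2:ℝ) = t := by
        rw [← Real.rpow_add ht0]; norm_num
      have heq : c₁ / t ^ (1/2:ℝ) * (t / m) = c₁ / m * t ^ (1/2:ℝ) := by
        have ht' : t / t ^ (1/2:ℝ) = t ^ (1/2:ℝ) :=
          (div_eq_iff hs0.ne').mpr hss.symm
        have expand : c₁ / t ^ (1/2:ℝ) * (t / m) = c₁ * (t / t ^ (1/2:ℝ)) / m := by ring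
        rw [expand, ht']; ring
      have honele : (1:ℝ) ≤ t ^ (1/2:ℝ) := by
        have := Real.rpow_le_rpow (le_of_lt one_pos) ht1 (by norm_num : (0:ℝ) ≤ 1/2)
        rwa [Real.one_rpow] at this
      have hone : (c₁ / m) ^ q ≤ (c₁ / m * t ^ (1/2:ℝ)) ^ q := by
        apply Real.rpow_le_rpow (by positivity) ?_ hq0.le
        have := mul_le_mul_of_nonneg_left honele (le_of_lt (div_pos hc₁pos hm0))
        linarith
      have hnum : ENNReal.ofReal ((c₁ / m) ^ q)
          ≤ (ENNReal.ofReal (b t) * Kfun ⇑e₀ ⇑e₁ f t) ^ q := by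
        calc ENNReal.ofReal ((c₁ / m) ^ q)
            ≤ ENNReal.ofReal ((c₁ / m * t ^ (1/2:ℝ)) ^ q) := ENNReal.ofReal_le_ofReal hone
          _ = (ENNReal.ofReal (c₁ / m * t ^ (1/2:ℝ))) ^ q :=
              (ENNReal.ofReal_rpow_of_nonneg (by positivity) hq0.le).symm
          _ = (ENNReal.ofReal (c₁ / t ^ (1/2:ℝ)) * ENNReal.ofReal (t / m)) ^ q := by
              rw [← ENNReal.ofReal_mul (by positivity), heq]
          _ ≤ (ENNReal.ofReal (b t) * Kfun ⇑e₀ ⇑e₁ f t) ^ q :=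
              ENNReal.rpow_le_rpow
                (mul_le_mul' (ENNReal.ofReal_le_ofReal (hlow t ht1)) hKt) hq0.le
      calc κ * ENNReal.ofReal t⁻¹ = ENNReal.ofReal ((c₁ / m) ^ q) / ENNReal.ofReal t := by
            rw [hκ, ENNReal.ofReal_inv_of_pos ht0, div_eq_mul_inv, div_eq_mul_inv]
        _ ≤ _ := ENNReal.div_le_div_right hnum _
    have hbig : (⊤:ℝ≥0∞) ≤ N f := by
      calc (⊤:ℝ≥0∞) = κ * ∫⁻ t in Ioi m, ENNReal.ofReal t⁻¹ := by
            rw [lintegral_inv_Ioi_top hm, ENNReal.mul_top hκ0]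
        _ = ∫⁻ t in Ioi m, κ * ENNReal.ofReal t⁻¹ :=
            (MeasureTheory.lintegral_const_mul' _ _ ENNReal.ofReal_ne_top).symm
        _ ≤ ∫⁻ t in Ioi m, (ENNReal.ofReal (b t) * Kfun ⇑e₀ ⇑e₁ f t) ^ q / ENNReal.ofReal t :=
            setLIntegral_mono' measurableSet_Ioi hge
        _ ≤ N f := lintegral_mono_set (Ioi_subset_Ioi (by linarith))
    exact hNf (top_le_iff.mp hbig)
  -- the approximating sequence
  have key : ∀ n : ℕ, ∃ h : V, e₀ (f - h) < ⊤ ∧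
      (∀ t : ℝ, 0 < t → Kfun ⇑e₀ ⇑e₁ h t ≤ 2 * Kfun ⇑e₀ ⇑e₁ f t + 1) ∧
      e₁ h ≤ ENNReal.ofReal (2 / ((n:ℝ) + 1)) := by
    intro n
    set m : ℝ := (n:ℝ) + 1 with hm
    have hm1 : (1:ℝ) ≤ m := by
      rw [hm]; have : (0:ℝ) ≤ (n:ℝ) := Nat.cast_nonneg n; linarith
    have hm0 : (0:ℝ) < m := lt_of_lt_of_le one_pos hm1
    obtain ⟨T, hmT, hKT⟩ := hT_exists m hm1
    have hT1 : (1:ℝ) ≤ T := hm1.trans hmT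
    have hT0 : (0:ℝ) < T := lt_of_lt_of_le one_pos hT1
    have hKTfin : Kfun ⇑e₀ ⇑e₁ f T < ⊤ := hKfin T hT0
    have honeM : ENNReal.ofReal (1/m) ≤ 1 := by
      rw [← ENNReal.ofReal_one]
      exact ENNReal.ofReal_le_ofReal (by rw [div_le_one hm0]; exact hm1)
    have hlt : (⨅ g : V, (⇑e₀) (f - g) + ENNReal.ofReal T * (⇑e₁) g)
        < Kfun ⇑e₀ ⇑e₁ f T + ENNReal.ofReal (1/m) :=
      ENNReal.lt_add_right hKTfin.ne (ENNReal.ofReal_pos.mpr (by positivity)).ne'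
    obtain ⟨h, hh⟩ := iInf_lt_iff.mp hlt
    have hsum : (⇑e₀) (f - h) + ENNReal.ofReal T * (⇑e₁) h
        ≤ ENNReal.ofReal T * ENNReal.ofReal (2/m) := by
      refine hh.le.trans ?_
      calc Kfun ⇑e₀ ⇑e₁ f T + ENNReal.ofReal (1/m)
          ≤ ENNReal.ofReal (T/m) + ENNReal.ofReal (1/m) := add_le_add_left hKT _
        _ = ENNReal.ofReal (T/m + 1/m) := (ENNReal.ofReal_add (by positivity) (by positivity)).symm
        _ ≤ ENNReal.ofReal (T * (2/m)) := by
            apply ENNReal.ofReal_le_ofReal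
            rw [← add_div, show T * (2/m) = T*2/m from (mul_div_assoc T 2 m).symm]
            gcongr
            linarith
        _ = ENNReal.ofReal T * ENNReal.ofReal (2/m) := ENNReal.ofReal_mul hT0.le
    have hTne : ENNReal.ofReal T ≠ 0 := (ENNReal.ofReal_pos.mpr hT0).ne'
    refine ⟨h, ?_, ?_, ?_⟩
    · exact lt_of_le_of_lt (le_trans le_self_add hsum)
        (ENNReal.mul_lt_top ENNReal.ofReal_lt_top ENNReal.ofReal_lt_top)
    · intro t ht
      rcases le_total t T with hcase | hcase
      · have s1 : ENNReal.ofReal T * Kfun ⇑e₀ ⇑e₁ h t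
            ≤ ENNReal.ofReal T * (Kfun ⇑e₀ ⇑e₁ f t + 1) := by
          calc ENNReal.ofReal T * Kfun ⇑e₀ ⇑e₁ h t
              ≤ ENNReal.ofReal T * (ENNReal.ofReal t * (⇑e₁) h) :=
                mul_le_mul_right (Kfun_le_e1 e₀ e₁ h t) _
            _ = ENNReal.ofReal t * (ENNReal.ofReal T * (⇑e₁) h) := by ring
            _ ≤ ENNReal.ofReal t * (Kfun ⇑e₀ ⇑e₁ f T + ENNReal.ofReal (1/m)) :=
                mul_le_mul_right (le_trans le_add_self hh.le) _
            _ = ENNReal.ofReal t * Kfun ⇑e₀ ⇑e₁ f T + ENNReal.ofReal t * ENNReal.ofReal (1/m) :=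
                mul_add _ _ _
            _ ≤ ENNReal.ofReal T * Kfun ⇑e₀ ⇑e₁ f t + ENNReal.ofReal T * 1 :=
                add_le_add (Kfun_scale e₀ e₁ f hcase hT0)
                  (mul_le_mul' (ENNReal.ofReal_le_ofReal hcase) honeM)
            _ = ENNReal.ofReal T * (Kfun ⇑e₀ ⇑e₁ f t + 1) := (mul_add _ _ _).symm
        have s2 : Kfun ⇑e₀ ⇑e₁ h t ≤ Kfun ⇑e₀ ⇑e₁ f t + 1 :=
          (ENNReal.mul_le_mul_iff_right hTne ENNReal.ofReal_ne_top).mp s1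
        refine s2.trans (add_le_add_left ?_ 1)
        rw [two_mul]; exact le_self_add
      · have s0 : Kfun ⇑e₀ ⇑e₁ h t ≤ Kfun ⇑e₀ ⇑e₁ f t + Kfun ⇑e₀ ⇑e₁ (f - h) t := by
          have hsub := Kfun_sub_le e₀ e₁ f (f - h) t
          rwa [_root_.sub_sub_cancel] at hsub
        have s1 : Kfun ⇑e₀ ⇑e₁ (f - h) t ≤ Kfun ⇑e₀ ⇑e₁ f t + 1 := by
          calc Kfun ⇑e₀ ⇑e₁ (f - h) t ≤ e₀ (f - h) := Kfun_le_e0 e₀ e₁ (f - h) t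
            _ ≤ Kfun ⇑e₀ ⇑e₁ f T + ENNReal.ofReal (1/m) := le_trans le_self_add hh.le
            _ ≤ Kfun ⇑e₀ ⇑e₁ f t + 1 := add_le_add (Kfun_mono e₀ e₁ f hcase) honeM
        calc Kfun ⇑e₀ ⇑e₁ h t
            ≤ Kfun ⇑e₀ ⇑e₁ f t + (Kfun ⇑e₀ ⇑e₁ f t + 1) := s0.trans (add_le_add_right s1 _)
          _ = 2 * Kfun ⇑e₀ ⇑e₁ f t + 1 := by ring
    · have h1 : ENNReal.ofReal T * (⇑e₁) h ≤ ENNReal.ofReal T * ENNReal.ofReal (2/m) :=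
        le_trans le_add_self hsum
      exact (ENNReal.mul_le_mul_iff_right hTne ENNReal.ofReal_ne_top).mp h1
  choose h hh0 hh1 hh2 using key
  -- dominated convergence
  have h2top : ((2:ℝ≥0∞)) ^ q ≠ ⊤ := ENNReal.rpow_ne_top_of_nonneg hq0.le ENNReal.ofNat_ne_top
  set bound : ℝ → ℝ≥0∞ := fun t =>
    (2:ℝ≥0∞) ^ q * ((ENNReal.ofReal (b t) * (2 * Kfun ⇑e₀ ⇑e₁ f t)) ^ q / ENNReal.ofReal t)
      + (2:ℝ≥0∞) ^ q * ((ENNReal.ofReal (b t)) ^ q / ENNReal.ofReal t) with hbounddef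
  have hboundint : (∫⁻ t in Ioi (0:ℝ), bound t) ≠ ⊤ := by
    have hBeq : (∫⁻ t in Ioi (0:ℝ), (ENNReal.ofReal (b t)) ^ q / ENNReal.ofReal t)
        = ∫⁻ t in Ioi (0:ℝ), ENNReal.ofReal (t⁻¹ * b t ^ q) := by
      refine setLIntegral_congr_fun measurableSet_Ioi (fun t ht => ?_)
      rw [mem_Ioi] at ht
      rw [ENNReal.ofReal_mul (inv_nonneg.mpr ht.le),
        ENNReal.ofReal_rpow_of_nonneg (hb.2.1 t ht).le hq0.le,
        ENNReal.ofReal_inv_of_pos ht, div_eq_mul_inv, mul_comm]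
    have hAeq : (∫⁻ t in Ioi (0:ℝ),
          (ENNReal.ofReal (b t) * (2 * Kfun ⇑e₀ ⇑e₁ f t)) ^ q / ENNReal.ofReal t)
        = (2:ℝ≥0∞) ^ q * N f := by
      simp only [hN]
      rw [← MeasureTheory.lintegral_const_mul' _ _ h2top]
      refine lintegral_congr fun t => ?_
      rw [show ENNReal.ofReal (b t) * (2 * Kfun ⇑e₀ ⇑e₁ f t)
            = 2 * (ENNReal.ofReal (b t) * Kfun ⇑e₀ ⇑e₁ f t) by ring,
        ENNReal.mul_rpow_of_nonneg _ _ hq0.le, mul_div_assoc]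
    have hmeasA : Measurable fun t =>
        (ENNReal.ofReal (b t) * (2 * Kfun ⇑e₀ ⇑e₁ f t)) ^ q / ENNReal.ofReal t :=
      (ENNReal.continuous_rpow_const.measurable.comp
        (hmx.mul ((measurable_const.mul (Kfun_measurable e₀ e₁ f))))).div
        ENNReal.measurable_ofReal
    rw [hbounddef]
    beta_reduce
    rw [MeasureTheory.lintegral_add_left (hmeasA.const_mul _)]
    rw [MeasureTheory.lintegral_const_mul' _ _ h2top,
      MeasureTheory.lintegral_const_mul' _ _ h2top, hAeq, hBeq]
    exact ENNReal.add_ne_top.mpr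
      ⟨ENNReal.mul_ne_top h2top (ENNReal.mul_ne_top h2top hNf),
       ENNReal.mul_ne_top h2top hbint.ne⟩
  have h_bound : ∀ n : ℕ,
      (fun t => (ENNReal.ofReal (b t) * Kfun ⇑e₀ ⇑e₁ (h n) t) ^ q / ENNReal.ofReal t)
        ≤ᵐ[volume.restrict (Ioi (0:ℝ))] bound := by
    intro n
    filter_upwards [ae_restrict_mem measurableSet_Ioi] with t ht
    rw [mem_Ioi] at ht
    have step1 : ENNReal.ofReal (b t) * Kfun ⇑e₀ ⇑e₁ (h n) t
        ≤ ENNReal.ofReal (b t) * (2 * Kfun ⇑e₀ ⇑e₁ f t) + ENNReal.ofReal (b t) := by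
      calc ENNReal.ofReal (b t) * Kfun ⇑e₀ ⇑e₁ (h n) t
          ≤ ENNReal.ofReal (b t) * (2 * Kfun ⇑e₀ ⇑e₁ f t + 1) :=
            mul_le_mul_right (hh1 n t ht) _
        _ = _ := by ring
    set A := ENNReal.ofReal (b t) * (2 * Kfun ⇑e₀ ⇑e₁ f t) with hA
    set Bv := ENNReal.ofReal (b t) with hBv
    have step2 : (ENNReal.ofReal (b t) * Kfun ⇑e₀ ⇑e₁ (h n) t) ^ q
        ≤ 2 ^ q * (A ^ q + Bv ^ q) := by
      calc (ENNReal.ofReal (b t) * Kfun ⇑e₀ ⇑e₁ (h n) t) ^ q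
          ≤ (A + Bv) ^ q := ENNReal.rpow_le_rpow step1 hq0.le
        _ ≤ (2 * max A Bv) ^ q := by
            refine ENNReal.rpow_le_rpow ?_ hq0.le
            rcases le_total A Bv with hab | hab
            · rw [max_eq_right hab, two_mul]; exact add_le_add hab le_rfl
            · rw [max_eq_left hab, two_mul]; exact add_le_add le_rfl hab
        _ = 2 ^ q * (max A Bv) ^ q := ENNReal.mul_rpow_of_nonneg _ _ hq0.le
        _ ≤ 2 ^ q * (A ^ q + Bv ^ q) := by
            refine mul_le_mul_right ?_ _
            rcases le_total A Bv with hab | hab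
            · rw [max_eq_right hab]; exact le_add_self
            · rw [max_eq_left hab]; exact le_self_add
    calc (ENNReal.ofReal (b t) * Kfun ⇑e₀ ⇑e₁ (h n) t) ^ q / ENNReal.ofReal t
        ≤ (2 ^ q * (A ^ q + Bv ^ q)) / ENNReal.ofReal t := ENNReal.div_le_div_right step2 _
      _ = bound t := by
          rw [hbounddef]
          simp only [div_eq_mul_inv]
          ring
  have h_lim : ∀ᵐ t ∂(volume.restrict (Ioi (0:ℝ))),
      Tendsto (fun n : ℕ =>
        (ENNReal.ofReal (b t) * Kfun ⇑e₀ ⇑e₁ (h n) t) ^ q / ENNReal.ofReal t)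
        atTop (𝓝 0) := by
    filter_upwards [ae_restrict_mem measurableSet_Ioi] with t ht
    rw [mem_Ioi] at ht
    have hcne : ENNReal.ofReal (b t) * ENNReal.ofReal t ≠ ⊤ :=
      ENNReal.mul_ne_top ENNReal.ofReal_ne_top ENNReal.ofReal_ne_top
    have hub : ∀ n : ℕ,
        (ENNReal.ofReal (b t) * Kfun ⇑e₀ ⇑e₁ (h n) t) ^ q / ENNReal.ofReal t
          ≤ ((ENNReal.ofReal (b t) * ENNReal.ofReal t) * ENNReal.ofReal (2/((n:ℝ)+1))) ^ q
            * (ENNReal.ofReal t)⁻¹ := by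
      intro n
      rw [div_eq_mul_inv]
      refine mul_le_mul_left (ENNReal.rpow_le_rpow ?_ hq0.le) _
      calc ENNReal.ofReal (b t) * Kfun ⇑e₀ ⇑e₁ (h n) t
          ≤ ENNReal.ofReal (b t) * (ENNReal.ofReal t * (⇑e₁) (h n)) :=
            mul_le_mul_right (Kfun_le_e1 e₀ e₁ (h n) t) _
        _ ≤ ENNReal.ofReal (b t) * (ENNReal.ofReal t * ENNReal.ofReal (2/((n:ℝ)+1))) :=
            mul_le_mul_right (mul_le_mul_right (hh2 n) _) _
        _ = (ENNReal.ofReal (b t) * ENNReal.ofReal t) * ENNReal.ofReal (2/((n:ℝ)+1)) :=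
            (mul_assoc _ _ _).symm
    have l1 : Tendsto (fun n : ℕ => (2:ℝ)/((n:ℝ)+1)) atTop (𝓝 0) :=
      Filter.Tendsto.div_atTop tendsto_const_nhds
        (tendsto_atTop_add_const_right atTop 1 tendsto_natCast_atTop_atTop)
    have l2 : Tendsto (fun n : ℕ => ENNReal.ofReal (2/((n:ℝ)+1))) atTop (𝓝 0) := by
      have := ENNReal.tendsto_ofReal l1
      simpa using this
    have l3 : Tendsto (fun n : ℕ =>
        (ENNReal.ofReal (b t) * ENNReal.ofReal t) * ENNReal.ofReal (2/((n:ℝ)+1)))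
        atTop (𝓝 0) := by
      have := ENNReal.Tendsto.const_mul l2 (Or.inr hcne)
      simpa using this
    have l4 : Tendsto (fun n : ℕ =>
        ((ENNReal.ofReal (b t) * ENNReal.ofReal t) * ENNReal.ofReal (2/((n:ℝ)+1))) ^ q)
        atTop (𝓝 0) := by
      have := ((ENNReal.continuous_rpow_const (y := q)).tendsto 0).comp l3
      simpa [Function.comp_def, ENNReal.zero_rpow_of_pos hq0] using this
    have l5 : Tendsto (fun n : ℕ =>
        ((ENNReal.ofReal (b t) * ENNReal.ofReal t) * ENNReal.ofReal (2/((n:ℝ)+1))) ^ q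
          * (ENNReal.ofReal t)⁻¹) atTop (𝓝 0) := by
      have := ENNReal.Tendsto.mul_const l4
        (Or.inr (ENNReal.inv_ne_top.mpr (ENNReal.ofReal_pos.mpr ht).ne'))
      simpa using this
    exact tendsto_of_tendsto_of_tendsto_of_le_of_le tendsto_const_nhds l5
      (fun n => bot_le) hub
  have hDCT : Tendsto (fun n : ℕ => N (h n)) atTop (𝓝 0) := by
    have := tendsto_lintegral_of_dominated_convergence (f := fun _ => 0) bound
      (fun n => hFmeas (h n)) h_bound hboundint h_lim
    simpa [lintegral_zero] using this
  have hεq : (0:ℝ≥0∞) < (ENNReal.ofReal ε) ^ q :=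
    ENNReal.rpow_pos (ENNReal.ofReal_pos.mpr hε) ENNReal.ofReal_ne_top
  obtain ⟨n, hn⟩ := (hDCT.eventually_lt_const hεq).exists
  refine ⟨f - h n, hh0 n, ?_⟩
  rw [_root_.sub_sub_cancel, hKnorm]
  calc (N (h n)) ^ (1/q) < ((ENNReal.ofReal ε) ^ q) ^ (1/q) :=
        ENNReal.rpow_lt_rpow hn (by positivity)
    _ = ENNReal.ofReal ε := by
        rw [← ENNReal.rpow_mul, mul_one_div_cancel hq0.ne', ENNReal.rpow_one]
end
end

section
/- Let (V,e₀,e₁) model a compatible couple (X₀,X₁) and let e_∧(f) := max(e₀ f, e₁ f) be the extended norm of X₀∩X₁. Then there exist absolute constants 0 < c ≤ C (independent of the couple) such that for every f ∈ V with e₀ f < ∞ and every t ∈ (0,1): c·(t·e₀ f + K(f,t;e₀,e₁)) ≤ K(f,t;e₀,e_∧) ≤ C·(t·e₀ f + K(f,t;e₀,e₁)), where K(f,t;e₀,e_∧) is the K-functional of the couple (X₀, X₀∩X₁). -/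
open MeasureTheory Set Filter ENNReal
open scoped Topology NNReal

noncomputable section

variable {V : Type*}

/-- The structure `ENorm 𝕜 V` of Mathlib (December 2024), an extended norm on a vector space,
re-declared here under the name `ENormedSpace` since Mathlib has removed it and `ENorm` is now
a different class. -/
structure ENormedSpace (𝕜 : Type*) (V : Type*) [NormedField 𝕜] [AddCommGroup V] [Module 𝕜 V] where
  toFun : V → ℝ≥0∞
  eq_zero' : ∀ x, toFun x = 0 → x = 0
  map_add_le' : ∀ x y : V, toFun (x + y) ≤ toFun x + toFun y
  map_smul_le' : ∀ (c : 𝕜) (x : V), toFun (c • x) ≤ ‖c‖₊ * toFun x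

instance ENormedSpace.instCoeFun {𝕜 : Type*} {V : Type*} [NormedField 𝕜] [AddCommGroup V]
    [Module 𝕜 V] : CoeFun (ENormedSpace 𝕜 V) fun _ => V → ℝ≥0∞ :=
  ⟨ENormedSpace.toFun⟩

universe u

/-- Lemma 3.5: with absolute constants (independent of the couple),
`K(f,t;X₀,X₀∩X₁) ≈ t·‖f‖_{X₀} + K(f,t;X₀,X₁)` for `f ∈ X₀` and `t ∈ (0,1)`. -/
theorem Kfun_intersection_couple_equiv :
    ∃ c C : ℝ≥0∞, 0 < c ∧ C < ⊤ ∧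
      ∀ (V : Type u) [AddCommGroup V] [Module ℝ V] (e₀ e₁ : ENormedSpace ℝ V) (f : V),
        e₀ f < ⊤ → ∀ t ∈ Ioo (0:ℝ) 1,
          c * (ENNReal.ofReal t * e₀ f + Kfun ⇑e₀ ⇑e₁ f t) ≤
            Kfun ⇑e₀ (eInt ⇑e₀ ⇑e₁) f t ∧
          Kfun ⇑e₀ (eInt ⇑e₀ ⇑e₁) f t ≤
            C * (ENNReal.ofReal t * e₀ f + Kfun ⇑e₀ ⇑e₁ f t) := by
  refine ⟨2⁻¹, 2, by norm_num, by norm_num, ?_⟩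
  intro V _ _ e₀ e₁ f _ t ht
  obtain ⟨ht0, ht1⟩ := ht
  have htle : ENNReal.ofReal t ≤ 1 := by
    rw [← ENNReal.ofReal_one]
    exact ENNReal.ofReal_le_ofReal ht1.le
  set A : ℝ≥0∞ := ENNReal.ofReal t * e₀ f with hA
  -- `t * e₀ f ≤ K(f,t;e₀,e∧)`
  have hA_le : A ≤ Kfun ⇑e₀ (eInt ⇑e₀ ⇑e₁) f t := by
    refine le_iInf fun g => ?_
    have h1 : (e₀ f : ℝ≥0∞) ≤ e₀ (f - g) + e₀ g := by
      calc (e₀ f : ℝ≥0∞) = e₀ ((f - g) + g) := by rw [sub_add_cancel]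
      _ ≤ _ := e₀.map_add_le' _ _
    calc A ≤ ENNReal.ofReal t * (e₀ (f - g) + e₀ g) := mul_le_mul_right h1 _
    _ = ENNReal.ofReal t * e₀ (f - g) + ENNReal.ofReal t * e₀ g := mul_add _ _ _
    _ ≤ 1 * e₀ (f - g) + ENNReal.ofReal t * eInt ⇑e₀ ⇑e₁ g := by
        gcongr
        · exact le_max_left _ _
    _ = e₀ (f - g) + ENNReal.ofReal t * eInt ⇑e₀ ⇑e₁ g := by rw [one_mul]
  -- `K(f,t;e₀,e₁) ≤ K(f,t;e₀,e∧)`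
  have hK_le : Kfun ⇑e₀ ⇑e₁ f t ≤ Kfun ⇑e₀ (eInt ⇑e₀ ⇑e₁) f t := by
    refine iInf_mono fun g => ?_
    gcongr
    exact le_max_right _ _
  constructor
  · -- lower bound with `c = 1/2`
    have hsum : A + Kfun ⇑e₀ ⇑e₁ f t ≤ 2 * Kfun ⇑e₀ (eInt ⇑e₀ ⇑e₁) f t := by
      rw [two_mul]
      exact add_le_add hA_le hK_le
    calc 2⁻¹ * (A + Kfun ⇑e₀ ⇑e₁ f t) ≤ 2⁻¹ * (2 * Kfun ⇑e₀ (eInt ⇑e₀ ⇑e₁) f t) :=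
          mul_le_mul_right hsum _
    _ = Kfun ⇑e₀ (eInt ⇑e₀ ⇑e₁) f t := by
        rw [← mul_assoc, ENNReal.inv_mul_cancel (by norm_num) (by norm_num), one_mul]
  · -- upper bound with `C = 2`
    rw [show (2 : ℝ≥0∞) * (A + Kfun ⇑e₀ ⇑e₁ f t)
        = ⨅ g : V, 2 * (A + (e₀ (f - g) + ENNReal.ofReal t * e₁ g)) by
      rw [Kfun, ENNReal.add_iInf, ENNReal.mul_iInf_of_ne (by norm_num) (by norm_num)]]
    refine le_iInf fun g => ?_
    have key : Kfun ⇑e₀ (eInt ⇑e₀ ⇑e₁) f t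
        ≤ e₀ (f - g) + ENNReal.ofReal t * eInt ⇑e₀ ⇑e₁ g := iInf_le _ g
    refine key.trans ?_
    have hint : (eInt ⇑e₀ ⇑e₁ g : ℝ≥0∞) ≤ e₀ f + e₀ (f - g) + e₁ g := by
      refine max_le ?_ ?_
      · calc (e₀ g : ℝ≥0∞) = e₀ (f - (f - g)) := by
              rw [show f - (f - g) = g by abel]
        _ ≤ e₀ f + e₀ (f - g) := by
            calc e₀ (f - (f - g)) = e₀ (f + (-1:ℝ) • (f - g)) := by
                  rw [neg_one_smul, sub_eq_add_neg]
            _ ≤ e₀ f + e₀ ((-1:ℝ) • (f - g)) := e₀.map_add_le' _ _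
            _ ≤ e₀ f + e₀ (f - g) := by
                refine add_le_add le_rfl ?_
                calc e₀ ((-1:ℝ) • (f - g)) ≤ ‖(-1:ℝ)‖₊ * e₀ (f - g) := e₀.map_smul_le' _ _
                _ = e₀ (f - g) := by simp
        _ ≤ _ := le_add_of_le_of_nonneg le_rfl zero_le'
      · exact le_add_of_nonneg_of_le zero_le' le_rfl
    calc e₀ (f - g) + ENNReal.ofReal t * eInt ⇑e₀ ⇑e₁ g
        ≤ e₀ (f - g) + ENNReal.ofReal t * (e₀ f + e₀ (f - g) + e₁ g) := by gcongr
    _ = e₀ (f - g) + (A + ENNReal.ofReal t * e₀ (f - g) + ENNReal.ofReal t * e₁ g) := by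
        rw [mul_add, mul_add]
    _ ≤ e₀ (f - g) + (A + 1 * e₀ (f - g) + ENNReal.ofReal t * e₁ g) := by gcongr
    _ = A + 2 * e₀ (f - g) + ENNReal.ofReal t * e₁ g := by
        rw [one_mul, two_mul]; ring
    _ ≤ 2 * A + 2 * e₀ (f - g) + 2 * (ENNReal.ofReal t * e₁ g) := by
        exact add_le_add (add_le_add (le_mul_of_one_le_left' one_le_two)
          le_rfl) (le_mul_of_one_le_left' one_le_two)
    _ = 2 * (A + (e₀ (f - g) + ENNReal.ofReal t * e₁ g)) := by ring
end
end
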